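/- Let M = [[e,f],[g,h]] ∈ SL_2(ℂ) with trace μ satisfying μ² ≠ 4, and set X = S_{n-1}(μ)², Y = S_{n-1}(μ)S_{n-2}(μ). Then the (2,2)-entry of Σ_{i=0}^{n-1} (Ad_M)^i in the basis {E,H,F} of sl_2(ℂ) equals (n(e-h)² + 2fg(2X - μY))/(μ² - 4). -/
import Mathlib


/-- The matrix of the adjoint action `g ↦ M g M⁻¹` on `sl₂(ℂ)` in the ordered basis
`E = [[0,1],[0,0]]`, `H = [[1,0],[0,-1]]`, `F = [[0,0],[1,0]]`. -/
noncomputable def AdMat (M : Matrix (Fin 2) (Fin 2) ℂ) : Matrix (Fin 3) (Fin 3) ℂ :=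
  Matrix.of fun i j =>
    let g := M * ![(!![0,1;0,0] : Matrix (Fin 2) (Fin 2) ℂ), !![1,0;0,-1], !![0,0;1,0]] j * M⁻¹
    ![g 0 1, g 0 0, g 1 0] i


private def AdE (a b c d : ℂ) : Matrix (Fin 3) (Fin 3) ℂ :=
  !![a^2, -(2*a*b), -b^2; -(a*c), a*d+b*c, b*d; -c^2, 2*c*d, d^2]

private lemma adE_mul (a b c d p q r u : ℂ) :
    AdE a b c d * AdE p q r u =
      AdE (a*p+b*r) (a*q+b*u) (c*p+d*r) (c*q+d*u) := by
  ext i j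
  fin_cases i <;> fin_cases j <;>
    simp [AdE, Matrix.mul_apply, Fin.sum_univ_succ] <;> ring

private lemma adE_one : AdE 1 0 0 1 = 1 := by
  ext i j
  fin_cases i <;> fin_cases j <;>
    simp [AdE, Matrix.one_apply, Matrix.vecHead, Matrix.vecTail]

private lemma adMat_eq (e f g h : ℂ) (hdet : e*h - f*g = 1) :
    AdMat !![e,f;g,h] = AdE e f g h := by
  have hinv : (!![e,f;g,h] : Matrix (Fin 2) (Fin 2) ℂ)⁻¹ = !![h,-f;-g,e] := by
    apply Matrix.inv_eq_right_inv
    ext i j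
    fin_cases i <;> fin_cases j <;>
      simp [Matrix.mul_apply, Fin.sum_univ_succ] <;>
      (first | ring1 | linear_combination hdet)
  ext i j
  fin_cases i <;> fin_cases j <;>
    simp [AdMat, AdE, hinv, Matrix.mul_apply, Fin.sum_univ_succ] <;> ring

section cheb
variable (S : ℤ → ℂ → ℂ) (μ : ℂ)
  (hS0 : ∀ v, S 0 v = 1) (hS1 : ∀ v, S 1 v = v)
  (hSrec : ∀ (k : ℤ) (v : ℂ), S k v = v * S (k - 1) v - S (k - 2) v)

include hS0 hS1 hSrec in
private lemma S_neg_one : S (-1) μ = 0 := by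
  have h := hSrec 1 μ
  norm_num [hS0, hS1] at h
  linear_combination h

include hS0 hS1 hSrec in
private lemma S_neg_two : S (-2) μ = -1 := by
  have h := hSrec 0 μ
  norm_num [hS0] at h
  rw [S_neg_one S μ hS0 hS1 hSrec] at h
  linear_combination h

include hS0 hS1 hSrec in
private lemma S_ident : ∀ m : ℕ,
    S ((m:ℤ)-1) μ^2 - μ * S ((m:ℤ)-1) μ * S ((m:ℤ)-2) μ + S ((m:ℤ)-2) μ^2 = 1 := by
  intro m
  induction m with
  | zero =>
      norm_num
      rw [S_neg_one S μ hS0 hS1 hSrec, S_neg_two S μ hS0 hS1 hSrec]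
      ring
  | succ m ih =>
      have h1 : ((m+1:ℕ):ℤ) - 1 = (m:ℤ) := by push_cast; ring
      have h2 : ((m+1:ℕ):ℤ) - 2 = (m:ℤ)-1 := by push_cast; ring
      rw [h1, h2]
      linear_combination ih + (S (m:ℤ) μ - S ((m:ℤ)-2) μ) * hSrec (m:ℤ) μ

include hS0 hS1 hSrec in
private lemma S_sum : ∀ n : ℕ,
    (μ^2-4) * (∑ i ∈ Finset.range n, S ((i:ℤ)-1) μ^2)
      = 2 * S ((n:ℤ)-1) μ^2 - μ * (S ((n:ℤ)-1) μ * S ((n:ℤ)-2) μ) - 2*n := by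
  intro n
  induction n with
  | zero =>
      norm_num
      rw [S_neg_one S μ hS0 hS1 hSrec]
      ring
  | succ n ih =>
      have h1 : ((n+1:ℕ):ℤ) - 1 = (n:ℤ) := by push_cast; ring
      have h2 : ((n+1:ℕ):ℤ) - 2 = (n:ℤ)-1 := by push_cast; ring
      rw [Finset.sum_range_succ, h1, h2]
      push_cast
      linear_combination ih - 2 * S_ident S μ hS0 hS1 hSrec n
        - (2 * S (n:ℤ) μ + μ * S ((n:ℤ)-1) μ - 2 * S ((n:ℤ)-2) μ) * hSrec (n:ℤ) μ

end cheb

section pow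
variable (S : ℤ → ℂ → ℂ)
  (hS0 : ∀ v, S 0 v = 1) (hS1 : ∀ v, S 1 v = v)
  (hSrec : ∀ (k : ℤ) (v : ℂ), S k v = v * S (k - 1) v - S (k - 2) v)
  (e f g h : ℂ) (hdet : e * h - f * g = 1)

include hS0 hS1 hSrec hdet in
private lemma adE_pow : ∀ i : ℕ,
    (AdE e f g h) ^ i =
      AdE (S ((i:ℤ)-1) (e+h) * e - S ((i:ℤ)-2) (e+h)) (S ((i:ℤ)-1) (e+h) * f)
          (S ((i:ℤ)-1) (e+h) * g) (S ((i:ℤ)-1) (e+h) * h - S ((i:ℤ)-2) (e+h)) := by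
  intro i
  induction i with
  | zero =>
      have e1 : ((0:ℕ):ℤ) - 1 = -1 := by norm_num
      have e2 : ((0:ℕ):ℤ) - 2 = -2 := by norm_num
      rw [pow_zero, e1, e2, S_neg_one S (e+h) hS0 hS1 hSrec,
        S_neg_two S (e+h) hS0 hS1 hSrec,
        show (0:ℂ)*e - (-1) = 1 from by ring, show (0:ℂ)*f = 0 from by ring,
        show (0:ℂ)*g = 0 from by ring, show (0:ℂ)*h - (-1) = 1 from by ring, adE_one]
  | succ i ih =>
      have h1 : ((i+1:ℕ):ℤ) - 1 = (i:ℤ) := by push_cast; ring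
      have h2 : ((i+1:ℕ):ℤ) - 2 = (i:ℤ)-1 := by push_cast; ring
      rw [pow_succ', ih, adE_mul, h1, h2]
      have a1 : e*(S ((i:ℤ)-1) (e+h) * e - S ((i:ℤ)-2) (e+h)) + f*(S ((i:ℤ)-1) (e+h) * g)
          = S (i:ℤ) (e+h) * e - S ((i:ℤ)-1) (e+h) := by
        linear_combination (-e) * hSrec (i:ℤ) (e+h) + (-(S ((i:ℤ)-1) (e+h))) * hdet
      have a2 : e*(S ((i:ℤ)-1) (e+h) * f) + f*(S ((i:ℤ)-1) (e+h) * h - S ((i:ℤ)-2) (e+h))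
          = S (i:ℤ) (e+h) * f := by
        linear_combination (-f) * hSrec (i:ℤ) (e+h)
      have a3 : g*(S ((i:ℤ)-1) (e+h) * e - S ((i:ℤ)-2) (e+h)) + h*(S ((i:ℤ)-1) (e+h) * g)
          = S (i:ℤ) (e+h) * g := by
        linear_combination (-g) * hSrec (i:ℤ) (e+h)
      have a4 : g*(S ((i:ℤ)-1) (e+h) * f) + h*(S ((i:ℤ)-1) (e+h) * h - S ((i:ℤ)-2) (e+h))
          = S (i:ℤ) (e+h) * h - S ((i:ℤ)-1) (e+h) := by
        linear_combination (-h) * hSrec (i:ℤ) (e+h) + (-(S ((i:ℤ)-1) (e+h))) * hdet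
      rw [a1, a2, a3, a4]

end pow

private lemma adE_apply_11 (a b c d : ℂ) : AdE a b c d 1 1 = a*d + b*c := by
  simp [AdE]

/-- the `(2,2)`-entry of `Σ_{i=0}^{n-1} (Ad_M)^i` equals
`(n(e-h)² + 2fg(2X - μY))/(μ² - 4)`. -/
theorem adjoint_sum_entry_two_two
    (S : ℤ → ℂ → ℂ)
    (hS0 : ∀ v, S 0 v = 1) (hS1 : ∀ v, S 1 v = v)
    (hSrec : ∀ (k : ℤ) (v : ℂ), S k v = v * S (k - 1) v - S (k - 2) v)
    (e f g h : ℂ) (hdet : e * h - f * g = 1)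
    (μ : ℂ) (hμ : μ = e + h) (hμ4 : μ ^ 2 ≠ 4)
    (n : ℕ) (hn : 0 < n)
    (X Y : ℂ) (hX : X = S ((n : ℤ) - 1) μ ^ 2) (hY : Y = S ((n : ℤ) - 1) μ * S ((n : ℤ) - 2) μ) :
    (∑ i ∈ Finset.range n, (AdMat !![e, f; g, h]) ^ i) 1 1 =
      (n * (e - h) ^ 2 + 2 * f * g * (2 * X - μ * Y)) / (μ ^ 2 - 4) := by

  subst hμ hX hY
  have entry : ∀ i : ℕ, ((AdMat !![e, f; g, h]) ^ i) 1 1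
      = 1 + 2*(f*g) * S ((i:ℤ)-1) (e+h) ^ 2 := by
    intro i
    rw [adMat_eq e f g h hdet, adE_pow S hS0 hS1 hSrec e f g h hdet i, adE_apply_11]
    linear_combination S_ident S (e+h) hS0 hS1 hSrec i
      + (S ((i:ℤ)-1) (e+h))^2 * hdet
  have hs := S_sum S (e+h) hS0 hS1 hSrec n
  have h4 : (e+h)^2 - 4 ≠ 0 := sub_ne_zero.mpr hμ4
  have hsum1 : (∑ i ∈ Finset.range n, (AdMat !![e, f; g, h]) ^ i) 1 1
      = (n : ℂ) + 2*(f*g) * ∑ i ∈ Finset.range n, S ((i:ℤ)-1) (e+h) ^ 2 := by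
    rw [Matrix.sum_apply]
    rw [Finset.sum_congr rfl (fun i _ => entry i)]
    rw [Finset.sum_add_distrib, Finset.sum_const, ← Finset.mul_sum]
    simp
  rw [hsum1, eq_div_iff h4]
  linear_combination (2*f*g) * hs + (4*(n:ℂ)) * hdet
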